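/- The set R = {x,a,y,b} is a regular closed subset of the five-point space T, its interior equals {x,a,y}, and this interior is a connected subspace of T; hence R is internally connected. -/

import Mathlib

/-!
Everything is read off the specialization preorder of `T`: no subbasic open contains `b`,
so every point specializes to `b`, and every subbasic open containing `a` contains `x` and `y`,
so `x` and `y` specialize to `a`. Hence `b` lies in the closure of `{x}` but not in the
interior of `{x, a, y, b}` (as `z ⤳ b`), and `{x, a, y}` is path connected through `a`.
-/

/-- The five-point space `T = {x, y, z, a, b}` (five pairwise distinct points). -/
inductive Pt : Type
  | x | y | z | a | b
deriving DecidableEq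

open Pt

/-- The topology on `T` generated by the subbasis `{x,z}`, `{y,z}`, `{x,a,y}`. -/
instance : TopologicalSpace Pt :=
  TopologicalSpace.generateFrom ({{x, z}, {y, z}, {x, a, y}} : Set (Set Pt))

open Set Topology TopologicalSpace

theorem specializes_generateFrom_iff {α : Type*} {g : Set (Set α)} {p q : α} :
    @Specializes α (generateFrom g) p q ↔ ∀ s ∈ g, q ∈ s → p ∈ s := by
  let := generateFrom g
  simp only [specializes_iff_pure, ← Filter.tendsto_id', tendsto_nhds_generateFrom_iff,
    preimage_id, Filter.mem_pure]

theorem Specializes.mem_interior {X : Type*} [TopologicalSpace X] {p q : X} {s : Set X}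
    (h : p ⤳ q) (hq : q ∈ interior s) : p ∈ s :=
  interior_subset (h.mem_open isOpen_interior hq)

theorem isPathConnected_of_forall_specializes {X : Type*} [TopologicalSpace X] {s : Set X}
    {q : X} (hq : q ∈ s) (h : ∀ p ∈ s, p ⤳ q) : IsPathConnected s :=
  ⟨q, hq, fun _ hp => ((h _ hp).joinedIn hp hq).symm⟩

namespace Pt

theorem specializes_iff {p q : Pt} :
    p ⤳ q ↔ ∀ s ∈ ({{x, z}, {y, z}, {x, a, y}} : Set (Set Pt)), q ∈ s → p ∈ s :=
  specializes_generateFrom_iff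

theorem specializes_b (p : Pt) : p ⤳ b := by
  simp [specializes_iff]

theorem specializes_a {p : Pt} (hp : p ∈ ({x, a, y} : Set Pt)) : p ⤳ a := by
  rcases hp with rfl | rfl | rfl <;> simp [specializes_iff]

theorem isOpen_xay : IsOpen ({x, a, y} : Set Pt) :=
  isOpen_generateFrom_of_mem (by simp)

theorem isClosed_xayb : IsClosed ({x, a, y, b} : Set Pt) := by
  have hcompl : ({x, a, y, b} : Set Pt)ᶜ = {x, z} ∩ {y, z} := by
    ext p; cases p <;> simp
  rw [← isOpen_compl_iff, hcompl]
  exact (isOpen_generateFrom_of_mem (by simp)).inter (isOpen_generateFrom_of_mem (by simp))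

theorem interior_xayb : interior ({x, a, y, b} : Set Pt) = {x, a, y} := by
  refine Subset.antisymm (fun p hp => ?_)
    (interior_maximal (by simp [insert_subset_iff]) isOpen_xay)
  rcases interior_subset hp with rfl | rfl | rfl | rfl
  · simp
  · simp
  · simp
  · simpa using (specializes_b z).mem_interior hp

theorem closure_xay : closure ({x, a, y} : Set Pt) = {x, a, y, b} := by
  refine Subset.antisymm (closure_minimal (by simp [insert_subset_iff]) isClosed_xayb) ?_
  have hb : b ∈ closure ({x, a, y} : Set Pt) :=
    (specializes_b x).mem_closed isClosed_closure (subset_closure (by simp))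
  simpa [insert_subset_iff, hb] using subset_closure (s := ({x, a, y} : Set Pt))

end Pt

/-- The set R = {x,a,y,b} is regular closed in T, its interior equals
{x,a,y}, and this interior is a connected subspace of T; hence R is internally
connected. -/
theorem stmt6 :
    ({x, a, y, b} : Set Pt) = closure (interior ({x, a, y, b} : Set Pt)) ∧
    interior ({x, a, y, b} : Set Pt) = ({x, a, y} : Set Pt) ∧
    IsConnected (interior ({x, a, y, b} : Set Pt)) := by
  rw [Pt.interior_xayb, Pt.closure_xay]
  exact ⟨rfl, rfl,
    (isPathConnected_of_forall_specializes (by simp) fun _ => Pt.specializes_a).isConnected⟩
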